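/- arXiv:1312.6550 — 2 statements merged into one kernel-verified Lean document; each statement's English description precedes it below -/
import Mathlib

section
/- Let z be a feasible solution to a star instance with uniform capacities u (constraints: ∑_i u·z_i ≥ w, ∑_i (f_i + d(i,j)·u)·z_i ≤ b, 0 ≤ z_i ≤ 1). Then there exists a feasible solution z' with ∑_i z'_i = ∑_i z_i such that at most one coordinate of z' is strictly between 0 and 1. -/
/-!
With a uniform capacity `u`, the demand constraint `∑ u z_i ≥ w` depends on `z` only through the
volume `∑ z_i`. So moving volume from a fractional coordinate `k` to a fractional coordinate `i`
of no larger cost `c i = f i + d(i,j) u` keeps `z` feasible. Moving `min (1 - z i) (z k)` makes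
`i` or `k` integral; repeating this leaves at most one fractional coordinate.
-/

open Finset

section Transfer

variable {ι : Type*}

def fractionalCoords (z : ι → ℝ) : Set ι := {i | 0 < z i ∧ z i < 1}

variable [DecidableEq ι]

def transfer (z : ι → ℝ) (i j : ι) (δ : ℝ) : ι → ℝ := z + Pi.single i δ - Pi.single j δ

variable {z : ι → ℝ} {i j : ι} {δ : ℝ}

theorem transfer_apply_left (hij : i ≠ j) : transfer z i j δ i = z i + δ := by
  simp [transfer, hij]

theorem transfer_apply_right (hij : i ≠ j) : transfer z i j δ j = z j - δ := by
  simp [transfer, hij.symm]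

theorem transfer_apply_of_ne {k : ι} (hki : k ≠ i) (hkj : k ≠ j) : transfer z i j δ k = z k := by
  simp [transfer, hki, hkj]

theorem sum_mul_transfer [Fintype ι] (c : ι → ℝ) :
    ∑ k, c k * transfer z i j δ k = ∑ k, c k * z k + δ * (c i - c j) := by
  simp only [transfer, Pi.sub_apply, Pi.add_apply, mul_sub, mul_add, sum_sub_distrib,
    sum_add_distrib, Pi.single_apply, mul_ite, mul_zero, sum_ite_eq', mem_univ, if_true]
  ring

theorem sum_transfer [Fintype ι] : ∑ k, transfer z i j δ k = ∑ k, z k := by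
  simpa using sum_mul_transfer (z := z) (i := i) (j := j) (δ := δ) (fun _ => 1)

theorem exists_transfer_fractionalCoords_ssubset [Fintype ι] {c : ι → ℝ} (hz : ∀ k, 0 ≤ z k ∧ z k ≤ 1)
    (hij : i ≠ j) (hi : i ∈ fractionalCoords z) (hj : j ∈ fractionalCoords z) (hc : c i ≤ c j) :
    ∃ g : ι → ℝ, (∀ k, 0 ≤ g k ∧ g k ≤ 1) ∧ ∑ k, g k = ∑ k, z k ∧
      ∑ k, c k * g k ≤ ∑ k, c k * z k ∧ fractionalCoords g ⊂ fractionalCoords z := by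
  obtain ⟨hi₀, hi₁⟩ := hi
  obtain ⟨hj₀, hj₁⟩ := hj
  set δ := min (1 - z i) (z j)
  have hδi : δ ≤ 1 - z i := min_le_left _ _
  have hδj : δ ≤ z j := min_le_right _ _
  have hδ : 0 < δ := lt_min (by linarith) hj₀
  refine ⟨transfer z i j δ, fun k => ?_, sum_transfer, ?_, ⟨fun k hk => ?_, fun hsub => ?_⟩⟩
  · by_cases hki : k = i
    · subst hki; rw [transfer_apply_left hij]; constructor <;> linarith
    by_cases hkj : k = j
    · subst hkj; rw [transfer_apply_right hij]; constructor <;> linarith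
    · rw [transfer_apply_of_ne hki hkj]; exact hz k
  · rw [sum_mul_transfer]
    nlinarith
  · by_cases hki : k = i
    · subst hki; exact ⟨hi₀, hi₁⟩
    by_cases hkj : k = j
    · subst hkj; exact ⟨hj₀, hj₁⟩
    · simpa only [fractionalCoords, Set.mem_ofPred_eq, transfer_apply_of_ne hki hkj] using hk
  · have hi' := (hsub ⟨hi₀, hi₁⟩).2
    have hj' := (hsub ⟨hj₀, hj₁⟩).1
    rw [transfer_apply_left hij] at hi'
    rw [transfer_apply_right hij] at hj'
    rcases min_choice (1 - z i) (z j) with h | h <;> linarith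

end Transfer

theorem exists_almost_integral_of_cost_le {ι : Type*} [Fintype ι] (c z : ι → ℝ)
    (hz : ∀ k, 0 ≤ z k ∧ z k ≤ 1) :
    ∃ z' : ι → ℝ, (∀ k, 0 ≤ z' k ∧ z' k ≤ 1) ∧ ∑ k, z' k = ∑ k, z k ∧
      ∑ k, c k * z' k ≤ ∑ k, c k * z k ∧ (fractionalCoords z').ncard ≤ 1 := by
  classical
  induction hN : (fractionalCoords z).ncard using Nat.strong_induction_on generalizing z with
  | _ N ih =>
  by_cases hN₁ : N ≤ 1
  · exact ⟨z, hz, rfl, le_rfl, hN ▸ hN₁⟩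
  obtain ⟨a, b, ha, hb, hab⟩ :=
    (Set.one_lt_ncard_iff (Set.toFinite _)).1 (hN ▸ lt_of_not_ge hN₁)
  obtain ⟨g, hg, hsum, hcost, hsub⟩ : ∃ g : ι → ℝ, (∀ k, 0 ≤ g k ∧ g k ≤ 1) ∧
      ∑ k, g k = ∑ k, z k ∧ ∑ k, c k * g k ≤ ∑ k, c k * z k ∧
      fractionalCoords g ⊂ fractionalCoords z := by
    rcases le_total (c a) (c b) with h | h
    · exact exists_transfer_fractionalCoords_ssubset hz hab ha hb h
    · exact exists_transfer_fractionalCoords_ssubset hz hab.symm hb ha h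
  obtain ⟨z', hz', hsum', hcost', hcard'⟩ :=
    ih _ (hN ▸ Set.ncard_lt_ncard hsub (Set.toFinite _)) g hg rfl
  exact ⟨z', hz', hsum'.trans hsum, hcost'.trans hcost, hcard'⟩

theorem uniform_star_almost_integral_general
    {n : ℕ} (u w b : ℝ) (f dj : Fin n → ℝ)
    (z : Fin n → ℝ)
    (hfeas : (∑ i, u * z i ≥ w) ∧ (∑ i, (f i + dj i * u) * z i ≤ b) ∧
      (∀ i, 0 ≤ z i ∧ z i ≤ 1)) :
    ∃ z' : Fin n → ℝ,
      ((∑ i, u * z' i ≥ w) ∧ (∑ i, (f i + dj i * u) * z' i ≤ b) ∧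
        (∀ i, 0 ≤ z' i ∧ z' i ≤ 1)) ∧
      (∑ i, z' i = ∑ i, z i) ∧
      Set.ncard {i : Fin n | 0 < z' i ∧ z' i < 1} ≤ 1 := by
  obtain ⟨hdemand, hbudget, hbox⟩ := hfeas
  obtain ⟨z', hbox', hsum, hcost, hcard⟩ :=
    exists_almost_integral_of_cost_le (fun i => f i + dj i * u) z hbox
  have hdemand' : ∑ i, u * z' i ≥ w := by
    rwa [← mul_sum, hsum, mul_sum]
  exact ⟨z', ⟨hdemand', hcost.trans hbudget, hbox'⟩, hsum, hcard⟩

/-- With uniform capacities, any feasible star-instance solution can be made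
almost integral (at most one fractional coordinate) preserving the volume. -/
theorem uniform_star_almost_integral
    {n : ℕ} (u w b : ℝ) (f dj : Fin n → ℝ)
    (hu : 0 < u) (hf : ∀ i, 0 ≤ f i) (hdj : ∀ i, 0 ≤ dj i)
    (hw : 0 ≤ w) (hb : 0 ≤ b)
    (z : Fin n → ℝ)
    (hfeas : (∑ i, u * z i ≥ w) ∧ (∑ i, (f i + dj i * u) * z i ≤ b) ∧
      (∀ i, 0 ≤ z i ∧ z i ≤ 1)) :
    ∃ z' : Fin n → ℝ,
      ((∑ i, u * z' i ≥ w) ∧ (∑ i, (f i + dj i * u) * z' i ≤ b) ∧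
        (∀ i, 0 ≤ z' i ∧ z' i ≤ 1)) ∧
      (∑ i, z' i = ∑ i, z i) ∧
      Set.ncard {i : Fin n | 0 < z' i ∧ z' i < 1} ≤ 1 :=
  uniform_star_almost_integral_general u w b f dj z hfeas
end

section
/- Let T be a rooted in-tree where each node i has its incoming children sorted left-to-right by nondecreasing distance to i. Form T' by keeping only the shortest incoming edge of each node and adding, for each other son j of i, an edge from j to its left brother (with the new edge length defined as d_s(j,i') := 2·d(j,i) where i is the father of j in T). Then in T': (a) every node has in-degree at most 2 and the root has in-degree at most 1; (b) for every edge (j,i') of T', d(j,i') ≤ d_s(j,i') = 2·d(j,i); (c) for consecutive edges (j,j'),(j',j'') of T', d_s(j,j') ≥ d_s(j',j''). -/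
/-- Binary center tree construction: each node of the tree `T` (given by the
father map `fa` with root `r`) keeps only its shortest incoming edge, and every
other son is re-attached to its immediate left brother.  The resulting tree
`T'` has in-degree at most two (at most one at the root), each new edge
`(j,i')` satisfies `dist j i' ≤ 2 * dist j (fa j)` (the new edge length), and
the new edge lengths are nonincreasing along directed paths. -/
theorem binary_center_tree_properties
    {α : Type*} [MetricSpace α]
    (V : Finset α) (r : α) (hr : r ∈ V)
    (fa : α → α)
    (hfa : ∀ x ∈ V, x ≠ r → fa x ∈ V)
    (hdec : ∀ x ∈ V, x ≠ r → fa x ≠ r → dist (fa x) (fa (fa x)) < dist x (fa x))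
    (hsib : ∀ x y, x ∈ V → y ∈ V → x ≠ r → y ≠ r → fa x = fa y → x ≠ y →
      dist x (fa x) ≠ dist y (fa y))
    (E' : α → α → Prop)
    (hE' : ∀ j i', E' j i' ↔ j ∈ V ∧ j ≠ r ∧
      -- either i' is the father of j and j is the closest son of i'
      ((i' = fa j ∧ ∀ y ∈ V, y ≠ r → fa y = fa j → y ≠ j →
          dist j (fa j) < dist y (fa j)) ∨
      -- or i' is the immediate left brother of j
       (i' ∈ V ∧ i' ≠ r ∧ i' ≠ j ∧ fa i' = fa j ∧
          dist i' (fa j) < dist j (fa j) ∧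
          ∀ y ∈ V, y ≠ r → fa y = fa j → dist y (fa j) < dist j (fa j) →
            dist y (fa j) ≤ dist i' (fa j)))) :
    (∀ i', Set.ncard {j | E' j i'} ≤ 2) ∧
    (Set.ncard {j | E' j r} ≤ 1) ∧
    (∀ j i', E' j i' → dist j i' ≤ 2 * dist j (fa j)) ∧
    (∀ j j' j'', E' j j' → E' j' j'' →
      2 * dist j' (fa j') ≤ 2 * dist j (fa j)) := by
  set SA := fun i' => {j | j ∈ V ∧ j ≠ r ∧ i' = fa j ∧
      ∀ y ∈ V, y ≠ r → fa y = fa j → y ≠ j → dist j (fa j) < dist y (fa j)} with hSAdef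
  set SB := fun i' => {j | j ∈ V ∧ j ≠ r ∧ fa i' = fa j ∧
      dist i' (fa j) < dist j (fa j) ∧
      ∀ y ∈ V, y ≠ r → fa y = fa j → dist y (fa j) < dist j (fa j) →
        dist y (fa j) ≤ dist i' (fa j)} with hSBdef
  have key : ∀ i', {j | E' j i'} ⊆ SA i' ∪ SB i' := by
    intro i' j hj
    rcases (hE' j i').mp hj with ⟨hjV, hjr, hA | hB⟩
    · exact Or.inl ⟨hjV, hjr, hA.1, hA.2⟩
    · exact Or.inr ⟨hjV, hjr, hB.2.2.2.1, hB.2.2.2.2.1, hB.2.2.2.2.2⟩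
  have hSA : ∀ i', (SA i').Subsingleton := by
    intro i' a ha b hb
    obtain ⟨haV, har, hfa1, hma⟩ := ha
    obtain ⟨hbV, hbr, hfb1, hmb⟩ := hb
    by_contra hne
    have hfab : fa a = fa b := by rw [← hfa1, hfb1]
    have h1 := hma b hbV hbr hfab.symm (Ne.symm hne)
    have h2 := hmb a haV har hfab hne
    rw [← hfab] at h2
    linarith
  have hSB : ∀ i', (SB i').Subsingleton := by
    intro i' a ha b hb
    obtain ⟨haV, har, hfa1, hia, hma⟩ := ha
    obtain ⟨hbV, hbr, hfb1, hib, hmb⟩ := hb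
    by_contra hne
    have hfab : fa a = fa b := by rw [← hfa1, hfb1]
    have hd := hsib a b haV hbV har hbr hfab hne
    rw [← hfab] at hd hib hmb
    rcases lt_or_gt_of_ne hd with h | h
    · have := hmb a haV har rfl h
      linarith
    · have := hma b hbV hbr hfab.symm h
      linarith
  refine ⟨?_, ?_, ?_, ?_⟩
  · intro i'
    calc Set.ncard {j | E' j i'} ≤ Set.ncard (SA i' ∪ SB i') :=
          Set.ncard_le_ncard (key i') ((hSA i').finite.union (hSB i').finite)
      _ ≤ (SA i').ncard + (SB i').ncard := Set.ncard_union_le _ _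
      _ ≤ 1 + 1 := by
          gcongr
          · exact (Set.ncard_le_one (hSA i').finite).mpr fun a ha b hb => hSA i' ha hb
          · exact (Set.ncard_le_one (hSB i').finite).mpr fun a ha b hb => hSB i' ha hb
  · have hsub : {j | E' j r}.Subsingleton := by
      intro a ha b hb
      apply hSA r
      · rcases (hE' a r).mp ha with ⟨haV, har, hA | hB⟩
        · exact ⟨haV, har, hA.1, hA.2⟩
        · exact absurd rfl hB.2.1
      · rcases (hE' b r).mp hb with ⟨hbV, hbr, hA | hB⟩
        · exact ⟨hbV, hbr, hA.1, hA.2⟩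
        · exact absurd rfl hB.2.1
    exact (Set.ncard_le_one hsub.finite).mpr fun a ha b hb => hsub ha hb
  · intro j i' h
    rcases (hE' j i').mp h with ⟨hjV, hjr, hA | hB⟩
    · rw [hA.1]
      have := dist_nonneg (x := j) (y := fa j)
      linarith
    · have htri : dist j i' ≤ dist j (fa j) + dist (fa j) i' := dist_triangle _ _ _
      have hc : dist (fa j) i' = dist i' (fa j) := dist_comm _ _
      linarith [hB.2.2.2.2.1]
  · intro j j' j'' h1 h2
    rcases (hE' j j').mp h1 with ⟨hjV, hjr, hA | hB⟩
    · rcases (hE' j' j'').mp h2 with ⟨hj'V, hj'r, _⟩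
      have hfar : fa j ≠ r := hA.1 ▸ hj'r
      have := hdec j hjV hjr hfar
      rw [hA.1]
      linarith
    · have he : dist j' (fa j') = dist j' (fa j) := by rw [hB.2.2.2.1]
      linarith [hB.2.2.2.2.1]
end
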